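/- For real β > 1 and the kernel G₀(x,t) equal to (t^{1−β}−1)/(1−β) for 0 < x ≤ t ≤ 1 and (x^{1−β}−1)/(1−β) for 0 < t ≤ x ≤ 1, the maximum over x ∈ [0,1] of ∫₀¹ |t^β G₀(x,t)| dt equals 1/(2(β+1)). -/

import Mathlib

/-- The Green function of the singular operator `u'' + (β/x) u'` with
boundary conditions `u'(0) = 0`, `u(1) = 0`, in the case `β > 1`. -/
noncomputable def laneEmdenG0 (β x t : ℝ) : ℝ :=
  if x ≤ t then (t ^ (1 - β) - 1) / (1 - β) else (x ^ (1 - β) - 1) / (1 - β)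

lemma laneEmden_abs_aux {β t c : ℝ} (hβ : 1 < β) (ht : 0 ≤ t) (hc : 1 ≤ c) :
    |t ^ β * ((c - 1) / (1 - β))| = t ^ β * (c - 1) / (β - 1) := by
  have h1 : t ^ β * ((c - 1) / (1 - β)) = -(t ^ β * (c - 1) / (β - 1)) := by
    have h2 : (1 - β) = -(β - 1) := by ring
    rw [h2, div_neg, mul_neg, mul_div_assoc]
  rw [h1, abs_neg, abs_of_nonneg]
  exact div_nonneg (mul_nonneg (Real.rpow_nonneg ht β) (by linarith)) (by linarith)

/-- For `β > 1`, the maximum over `x ∈ [0,1]` of `∫₀¹ |t^β G₀(x,t)| dt`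
equals `1/(2(β+1))`. -/
theorem max_integral_G0 (β : ℝ) (hβ : 1 < β) :
    IsGreatest
      {y : ℝ | ∃ x ∈ Set.Icc (0:ℝ) 1,
        y = ∫ t in (0:ℝ)..1, |t ^ β * laneEmdenG0 β x t|}
      (1 / (2 * (β + 1))) := by
  have hβ0 : (0:ℝ) < β := by linarith
  have hbm : (0:ℝ) < β - 1 := by linarith
  have hbp : (0:ℝ) < β + 1 := by linarith
  set g : ℝ → ℝ := fun t => (t - t ^ β) / (β - 1) with hgdef
  -- basic rpow facts on (0,1]
  have hrpow : ∀ t ∈ Set.Ioc (0:ℝ) 1, t ^ β * (t ^ (1 - β) - 1) = t - t ^ β := by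
    intro t ht
    have : t ^ β * t ^ (1 - β) = t := by
      rw [← Real.rpow_add ht.1]; simp
    rw [mul_sub, this, mul_one]
  have hone_le : ∀ t ∈ Set.Ioc (0:ℝ) 1, 1 ≤ t ^ (1 - β) := by
    intro t ht
    calc (1:ℝ) = (1:ℝ) ^ (1 - β) := by simp
    _ ≤ t ^ (1 - β) := Real.rpow_le_rpow_of_nonpos ht.1 ht.2 (by linarith)
  -- pointwise equality at x = 0
  have eq0 : ∀ t ∈ Set.Icc (0:ℝ) 1, |t ^ β * laneEmdenG0 β 0 t| = g t := by
    intro t ht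
    rcases eq_or_lt_of_le ht.1 with h0 | h0
    · simp [← h0, hgdef, Real.zero_rpow hβ0.ne']
    · have htI : t ∈ Set.Ioc (0:ℝ) 1 := ⟨h0, ht.2⟩
      rw [laneEmdenG0, if_pos h0.le, laneEmden_abs_aux hβ h0.le (hone_le t htI),
        mul_div_assoc, ← mul_div_assoc, hrpow t htI]
  -- pointwise bound for general x
  have key : ∀ x ∈ Set.Icc (0:ℝ) 1, ∀ t ∈ Set.Icc (0:ℝ) 1,
      |t ^ β * laneEmdenG0 β x t| ≤ g t := by
    intro x hx t ht
    rcases eq_or_lt_of_le ht.1 with h0 | h0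
    · simp [← h0, hgdef, Real.zero_rpow hβ0.ne']
    · have htI : t ∈ Set.Ioc (0:ℝ) 1 := ⟨h0, ht.2⟩
      rw [laneEmdenG0]
      by_cases hxt : x ≤ t
      · rw [if_pos hxt]
        exact le_of_eq (by rw [← eq0 t ht, laneEmdenG0, if_pos (by linarith [hx.1] : (0:ℝ) ≤ t)])
      · push_neg at hxt
        have hx0 : 0 < x := lt_trans h0 hxt
        rw [if_neg (not_le.mpr hxt), laneEmden_abs_aux hβ h0.le
          (by calc (1:ℝ) = (1:ℝ) ^ (1 - β) := by simp
              _ ≤ x ^ (1 - β) := Real.rpow_le_rpow_of_nonpos hx0 hx.2 (by linarith))]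
        have hmono : x ^ (1 - β) ≤ t ^ (1 - β) :=
          Real.rpow_le_rpow_of_nonpos h0 hxt.le (by linarith)
        have hcmp : t ^ β * (x ^ (1 - β) - 1) ≤ t - t ^ β := by
          rw [← hrpow t htI]
          have htb : (0:ℝ) ≤ t ^ β := Real.rpow_nonneg h0.le β
          nlinarith
        exact div_le_div_of_nonneg_right hcmp hbm.le
  -- integrability of g
  have hgint : IntervalIntegrable g MeasureTheory.volume 0 1 := by
    apply IntervalIntegrable.div_const
    exact (intervalIntegral.intervalIntegrable_id).sub
      (intervalIntegral.intervalIntegrable_rpow (Or.inl hβ0.le))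
  -- value of ∫ g
  have hgval : (∫ t in (0:ℝ)..1, g t) = 1 / (2 * (β + 1)) := by
    have h1 : (∫ t in (0:ℝ)..1, g t)
        = (∫ t in (0:ℝ)..1, (t - t ^ β)) / (β - 1) := by
      rw [hgdef, intervalIntegral.integral_div]
    rw [h1, intervalIntegral.integral_sub intervalIntegral.intervalIntegrable_id
      (intervalIntegral.intervalIntegrable_rpow (Or.inl hβ0.le)),
      integral_id, integral_rpow (Or.inl (by linarith))]
    rw [Real.zero_rpow (by linarith : β + 1 ≠ 0)]
    field_simp
    simp only [Real.one_rpow]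
    ring
  -- integrability of the general integrand
  have hgint' : MeasureTheory.IntegrableOn g (Set.Ioc 0 1) MeasureTheory.volume := by
    have := hgint
    rwa [intervalIntegrable_iff, Set.uIoc_of_le zero_le_one] at this
  have hfint : ∀ x ∈ Set.Icc (0:ℝ) 1, IntervalIntegrable
      (fun t => |t ^ β * laneEmdenG0 β x t|) MeasureTheory.volume 0 1 := by
    intro x hx
    rw [intervalIntegrable_iff, Set.uIoc_of_le zero_le_one]
    have hsub1 : MeasureTheory.IntegrableOn (fun t => |t ^ β * laneEmdenG0 β x t|)
        (Set.Ioc 0 1 ∩ Set.Ici x) MeasureTheory.volume := by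
      refine (hgint'.mono_set Set.inter_subset_left).congr_fun (fun t ht => ?_)
        (measurableSet_Ioc.inter measurableSet_Ici)
      rw [laneEmdenG0, if_pos (Set.mem_Ici.mp ht.2), ← eq0 t ⟨ht.1.1.le, ht.1.2⟩, laneEmdenG0,
        if_pos ht.1.1.le]
    have hsub2 : MeasureTheory.IntegrableOn (fun t => |t ^ β * laneEmdenG0 β x t|)
        (Set.Ioc 0 1 ∩ Set.Iio x) MeasureTheory.volume := by
      have hbase : MeasureTheory.IntegrableOn
          (fun t : ℝ => |(x ^ (1 - β) - 1) / (1 - β)| * t ^ β)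
          (Set.Ioc 0 1) MeasureTheory.volume := by
        have := (intervalIntegral.intervalIntegrable_rpow (μ := MeasureTheory.volume)
          (a := (0:ℝ)) (b := 1) (r := β) (Or.inl hβ0.le)).const_mul
          |(x ^ (1 - β) - 1) / (1 - β)|
        rwa [intervalIntegrable_iff, Set.uIoc_of_le zero_le_one] at this
      refine (hbase.mono_set Set.inter_subset_left).congr_fun (fun t ht => ?_)
        (measurableSet_Ioc.inter measurableSet_Iio)
      rw [laneEmdenG0, if_neg (not_le.mpr (Set.mem_Iio.mp ht.2)), abs_mul,
        abs_of_nonneg (Real.rpow_nonneg ht.1.1.le β), mul_comm]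
    have hunion : Set.Ioc (0:ℝ) 1
        = (Set.Ioc 0 1 ∩ Set.Iio x) ∪ (Set.Ioc 0 1 ∩ Set.Ici x) := by
      rw [← Set.inter_union_distrib_left, Set.Iio_union_Ici, Set.inter_univ]
    rw [hunion]
    exact hsub2.union hsub1
  constructor
  · exact ⟨0, ⟨le_refl 0, zero_le_one⟩, by
      rw [← hgval]
      exact (intervalIntegral.integral_congr fun t ht =>
        eq0 t (by rwa [Set.uIcc_of_le zero_le_one] at ht)).symm⟩
  · rintro y ⟨x, hx, rfl⟩
    calc (∫ t in (0:ℝ)..1, |t ^ β * laneEmdenG0 β x t|)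
        ≤ ∫ t in (0:ℝ)..1, g t :=
          intervalIntegral.integral_mono_on zero_le_one (hfint x hx) hgint (key x hx)
    _ = 1 / (2 * (β + 1)) := hgval
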